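/- Combining the above identities: under the stated regularity hypotheses, the policy gradient satisfies ∂_θ J(θ) = ∂_θ [ -KL(p_θ ‖ p_A) + KL(p_θ ‖ p_old) ], where J(θ) = E_{p_θ}[A], p_A = p_old·exp(A)/Z, and p_old, A, Z are held fixed (independent of θ). -/

import Mathlib

/-!
Pointwise on `{p θ > 0}` (where `pOld > 0`), the two log-ratios differ by
`log (p_A / p_old) = A - log Z`, so `KL(p_θ ‖ p_old) - KL(p_θ ‖ p_A) = E_{p_θ}[A] - log Z`
for every `θ`. The two objectives therefore differ by a constant and have the same derivative;
no differentiability is needed, since `deriv` commutes with subtracting a constant.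
-/

open MeasureTheory Real

noncomputable def densityKL {α : Type*} [MeasurableSpace α] (μ : Measure α) (p q : α → ℝ) :
    ℝ :=
  ∫ x, p x * log (p x / q x) ∂μ

theorem mul_log_div_sub_mul_log_div_exp_tilt {a b c Z : ℝ} (ha : 0 ≤ a) (hb : 0 < a → 0 < b)
    (hZ : Z ≠ 0) :
    a * log (a / b) - a * log (a / (b * exp c / Z)) = a * c - a * log Z := by
  rcases ha.eq_or_lt with rfl | ha
  · simp
  have hb := (hb ha).ne'
  rw [log_div ha.ne' hb, log_div ha.ne' (div_ne_zero (mul_ne_zero hb (exp_ne_zero c)) hZ),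
    log_div (mul_ne_zero hb (exp_ne_zero c)) hZ, log_mul hb (exp_ne_zero c), log_exp]
  ring

theorem neg_densityKL_exp_tilt_add_densityKL {α : Type*} [MeasurableSpace α] {μ : Measure α}
    {p q A : α → ℝ} {Z : ℝ} (hp : ∀ x, 0 ≤ p x) (hp_one : ∫ x, p x ∂μ = 1)
    (hq : ∀ x, 0 < p x → 0 < q x) (hZ : Z ≠ 0)
    (hpq : Integrable (fun x => p x * log (p x / q x)) μ)
    (hp_tilt : Integrable (fun x => p x * log (p x / (q x * exp (A x) / Z))) μ)
    (hpA : Integrable (fun x => p x * A x) μ) :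
    -densityKL μ p (fun x => q x * exp (A x) / Z) + densityKL μ p q
      = ∫ x, p x * A x ∂μ - log Z := by
  have hp_int : Integrable p μ := integrable_of_integral_eq_one hp_one
  calc -densityKL μ p (fun x => q x * exp (A x) / Z) + densityKL μ p q
      = ∫ x, (p x * log (p x / q x) - p x * log (p x / (q x * exp (A x) / Z))) ∂μ := by
        rw [densityKL, densityKL, integral_sub hpq hp_tilt]
        ring
    _ = ∫ x, (p x * A x - p x * log Z) ∂μ := by
        congr with x
        exact mul_log_div_sub_mul_log_div_exp_tilt (hp x) (hq x) hZ
    _ = ∫ x, p x * A x ∂μ - log Z := by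
        rw [integral_sub hpA (hp_int.mul_const _), integral_mul_const, hp_one, one_mul]

theorem policy_gradient_kl_form_general {α : Type*} [MeasurableSpace α]
    (ν : Measure α)
    (p : ℝ → α → ℝ) (pOld : α → ℝ) (A : α → ℝ) (Z : ℝ) (θ₀ : ℝ)
    (hpθ : ∀ θ x, 0 ≤ p θ x) (hpθInt : ∀ θ, ∫ x, p θ x ∂ν = 1)
    (hZpos : 0 < Z)
    (habs : ∀ θ x, 0 < p θ x → 0 < pOld x)
    (h1 : ∀ θ, Integrable (fun x => p θ x * Real.log (p θ x / pOld x)) ν)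
    (h2 : ∀ θ, Integrable
      (fun x => p θ x * Real.log (p θ x / (pOld x * Real.exp (A x) / Z))) ν)
    (h3 : ∀ θ, Integrable (fun x => p θ x * A x) ν) :
    deriv (fun θ => ∫ x, p θ x * A x ∂ν) θ₀ =
      deriv (fun θ =>
        -(∫ x, p θ x * Real.log (p θ x / (pOld x * Real.exp (A x) / Z)) ∂ν)
          + ∫ x, p θ x * Real.log (p θ x / pOld x) ∂ν) θ₀ := by
  have hobjective : ∀ θ,
      -(∫ x, p θ x * log (p θ x / (pOld x * exp (A x) / Z)) ∂ν)
          + ∫ x, p θ x * log (p θ x / pOld x) ∂ν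
        = ∫ x, p θ x * A x ∂ν - log Z := fun θ =>
    neg_densityKL_exp_tilt_add_densityKL (hpθ θ) (hpθInt θ) (habs θ) hZpos.ne'
      (h1 θ) (h2 θ) (h3 θ)
  simp only [hobjective, deriv_sub_const]

/-- Mode-seeking form of the policy gradient: with p_A = p_old·exp(A)/Z fixed
(independent of θ), under the stated regularity/integrability hypotheses,
∂_θ E_{p_θ}[A] = ∂_θ [ -KL(p_θ‖p_A) + KL(p_θ‖p_old) ]. -/
theorem policy_gradient_kl_form {α : Type*} [MeasurableSpace α]
    (ν : Measure α) [SigmaFinite ν]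
    (p : ℝ → α → ℝ) (pOld : α → ℝ) (A : α → ℝ) (Z : ℝ) (θ₀ : ℝ)
    (hpθ : ∀ θ x, 0 ≤ p θ x) (hpθInt : ∀ θ, ∫ x, p θ x ∂ν = 1)
    (hpOld : ∀ x, 0 ≤ pOld x) (hpOldInt : ∫ x, pOld x ∂ν = 1)
    (hAmeas : Measurable A) (C : ℝ) (hAbd : ∀ x, |A x| ≤ C)
    (hZ : Z = ∫ x, pOld x * Real.exp (A x) ∂ν) (hZpos : 0 < Z)
    (habs : ∀ θ x, 0 < p θ x → 0 < pOld x)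
    (h1 : ∀ θ, Integrable (fun x => p θ x * Real.log (p θ x / pOld x)) ν)
    (h2 : ∀ θ, Integrable
      (fun x => p θ x * Real.log (p θ x / (pOld x * Real.exp (A x) / Z))) ν)
    (h3 : ∀ θ, Integrable (fun x => p θ x * A x) ν) :
    deriv (fun θ => ∫ x, p θ x * A x ∂ν) θ₀ =
      deriv (fun θ =>
        -(∫ x, p θ x * Real.log (p θ x / (pOld x * Real.exp (A x) / Z)) ∂ν)
          + ∫ x, p θ x * Real.log (p θ x / pOld x) ∂ν) θ₀ :=
  policy_gradient_kl_form_general ν p pOld A Z θ₀ hpθ hpθInt hZpos habs h1 h2 h3
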